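/- Let m be a positive even integer and θ∈(0,1) with m(1−θ)>4. Let w ∈ W_{m,θ/2}(ℝ) and φ ∈ H (the Cameron–Martin space of absolutely continuous paths on [0,1] starting at 0 with square-integrable derivative). Define the iterated integral C(w,φ)_{s,t} = ∫_s^t (w_u − w_s) φ'(u) du and C(φ,w)_{s,t} = (w_t−w_s)(φ_t−φ_s) − C(w,φ)_{s,t}. Then: ‖φ‖_{m,θ/2} ≤ ‖φ‖_H, ‖C(w,φ)‖_{m,θ} ≤ ‖w‖_{m,θ/2} ‖φ‖_H, and ‖C(φ,w)‖_{m,θ} ≤ 2 ‖w‖_{m,θ/2} ‖φ‖_H. -/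

import Mathlib

/-!
Cauchy–Schwarz gives `|φ t - φ s| ≤ ‖φ‖_H (t - s) ^ (1/2)`. Since `m (1 - θ) ≥ 4`, this bounds
the integrand of `‖φ‖_{m,θ/2}` by `‖φ‖_H ^ m` on a simplex of area at most one, and it bounds the
first term of `C(φ,w)` by `‖φ‖_H` times the increments of `w`.

For `C(w,φ)` write `m = 2k`. Cauchy–Schwarz followed by Jensen gives
`|C(w,φ)_{s,t}| ^ m ≤ ‖φ‖_H ^ m (t - s) ^ (k - 1) ∫_s^t |w_u - w_s| ^ m du`.
Integrate over the simplex and exchange the `t`- and `u`-integrals (Tonelli). Since `m (1 - θ) ≥ 2`,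
the weight `(t - s) ^ (k - 3 - mθ)` is at most `(u - s) ^ (-(2 + mθ/2))` for `u ≤ t`, which leaves
`‖φ‖_H ^ m ‖w‖_{m,θ/2} ^ m`.

The bound for `C(φ,w)` then follows from Minkowski's inequality, because `‖f‖_{m,θ}` is the
`L^m` norm on the simplex of `f(s,t) / (t - s) ^ ((2 + mθ) / m)`.
-/

open MeasureTheory Set

/-- The simplex `Δ = {(s,t) : 0 ≤ s ≤ t ≤ 1}`. -/
def simplexSet : Set (ℝ × ℝ) := {p | 0 ≤ p.1 ∧ p.1 ≤ p.2 ∧ p.2 ≤ 1}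

/-- The Besov-type norm `‖φ‖_{m,θ} = (∬_Δ |φ(s,t)|^m/(t−s)^{2+mθ} ds dt)^{1/m}` of a
function `φ` on the simplex. -/
noncomputable def besovNorm (m : ℕ) (θ : ℝ) (φ : ℝ → ℝ → ℝ) : ℝ :=
  (∫ p in simplexSet, |φ p.1 p.2| ^ m / (p.2 - p.1) ^ (2 + (m : ℝ) * θ)) ^ ((1 : ℝ) / m)

/-- Integrability of the Besov integrand (finiteness of the `‖·‖_{m,θ}` norm). -/
def BesovFinite (m : ℕ) (θ : ℝ) (φ : ℝ → ℝ → ℝ) : Prop :=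
  IntegrableOn (fun p : ℝ × ℝ => |φ p.1 p.2| ^ m / (p.2 - p.1) ^ (2 + (m : ℝ) * θ)) simplexSet

/-- The increment Besov norm `‖x‖_{m,θ}` of a path, i.e. `‖(s,t) ↦ x_t − x_s‖_{m,θ}`. -/
noncomputable def incNorm (m : ℕ) (θ : ℝ) (x : ℝ → ℝ) : ℝ :=
  besovNorm m θ (fun s t => x t - x s)

/-- The Hölder norm `‖φ‖_{H,θ} = sup_{0 ≤ s < t ≤ 1} |φ(s,t)|/(t−s)^θ` on the simplex. -/
noncomputable def holderNorm (θ : ℝ) (φ : ℝ → ℝ → ℝ) : ℝ :=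
  sSup {r | ∃ s t : ℝ, 0 ≤ s ∧ s < t ∧ t ≤ 1 ∧ r = |φ s t| / (t - s) ^ θ}

/-- Membership in `W_{m,θ}(ℝ)`: continuous paths on `[0,1]` starting at `0` with finite
increment Besov norm. -/
def MemW (m : ℕ) (θ : ℝ) (x : ℝ → ℝ) : Prop :=
  ContinuousOn x (Icc (0 : ℝ) 1) ∧ x 0 = 0 ∧ BesovFinite m θ (fun s t => x t - x s)

/-- The constant `M_{m,θ} = sup_{x ≠ 0, x ∈ W_{m,θ/2}(ℝ)} ‖x‖_{H,θ/2}/‖x‖_{m,θ/2}`. -/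
noncomputable def besovHolderConst (m : ℕ) (θ : ℝ) : ℝ :=
  sSup {c | ∃ x : ℝ → ℝ, MemW m (θ / 2) x ∧ (∃ t ∈ Icc (0:ℝ) 1, x t ≠ 0) ∧
    c = holderNorm (θ / 2) (fun s t => x t - x s) / incNorm m (θ / 2) x}

open scoped ENNReal NNReal

lemma measurableSet_simplexSet : MeasurableSet simplexSet :=
  (measurableSet_le measurable_const measurable_fst).inter
    ((measurableSet_le measurable_fst measurable_snd).inter
      (measurableSet_le measurable_snd measurable_const))

lemma volume_simplexSet_le_one : volume simplexSet ≤ 1 :=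
  calc volume simplexSet ≤ volume (Icc (0:ℝ) 1 ×ˢ Icc (0:ℝ) 1) :=
        measure_mono fun p ⟨h0, h1, h2⟩ => ⟨⟨h0, h1.trans h2⟩, h0.trans h1, h2⟩
    _ = 1 := by rw [Measure.volume_eq_prod, Measure.prod_prod]; simp

lemma mapsTo_fst_simplexSet : MapsTo Prod.fst simplexSet (Icc 0 1) :=
  fun _ hp => ⟨hp.1, hp.2.1.trans hp.2.2⟩

lemma mapsTo_snd_simplexSet : MapsTo Prod.snd simplexSet (Icc 0 1) :=
  fun _ hp => ⟨hp.1.trans hp.2.1, hp.2.2⟩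

lemma ContinuousOn.increment_simplexSet {x : ℝ → ℝ} (hx : ContinuousOn x (Icc 0 1)) :
    ContinuousOn (fun p : ℝ × ℝ => x p.2 - x p.1) simplexSet :=
  (hx.comp continuousOn_snd mapsTo_snd_simplexSet).sub
    (hx.comp continuousOn_fst mapsTo_fst_simplexSet)

lemma setLIntegral_setLIntegral_eq_lintegral_lintegral_indicator {α β : Type*}
    [MeasurableSpace α] [MeasurableSpace β] {μ : Measure α} {ν : Measure β} {A : Set α}
    {B : α → Set β} (hA : MeasurableSet A) (hB : ∀ x, MeasurableSet (B x))
    (f : α → β → ℝ≥0∞) :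
    ∫⁻ x in A, ∫⁻ y in B x, f x y ∂ν ∂μ
      = ∫⁻ x, ∫⁻ y, {q : α × β | q.1 ∈ A ∧ q.2 ∈ B q.1}.indicator (Function.uncurry f) (x, y)
          ∂ν ∂μ := by
  rw [← lintegral_indicator hA]
  refine lintegral_congr fun x => ?_
  by_cases hx : x ∈ A
  · rw [indicator_of_mem hx, ← lintegral_indicator (hB x)]
    refine lintegral_congr fun y => ?_
    by_cases hy : y ∈ B x <;> simp [indicator, hx, hy]
  · simp [indicator, hx]

lemma setOf_mem_Icc_and_mem_Icc_eq_simplexSet :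
    {q : ℝ × ℝ | q.1 ∈ Icc 0 1 ∧ q.2 ∈ Icc q.1 1} = simplexSet := by
  ext q
  simp only [simplexSet, mem_ofPred_eq, mem_Icc]
  grind

lemma lintegral_simplexSet {f : ℝ × ℝ → ℝ≥0∞} (hf : Measurable f) :
    ∫⁻ p in simplexSet, f p = ∫⁻ s in Icc 0 1, ∫⁻ t in Icc s 1, f (s, t) := by
  rw [setLIntegral_setLIntegral_eq_lintegral_lintegral_indicator measurableSet_Icc
    (fun _ => measurableSet_Icc) fun s t => f (s, t), setOf_mem_Icc_and_mem_Icc_eq_simplexSet,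
    ← lintegral_indicator measurableSet_simplexSet, Measure.volume_eq_prod,
    lintegral_prod _ (hf.indicator measurableSet_simplexSet).aemeasurable]
  rfl

lemma lintegral_simplexSet_le (f : ℝ × ℝ → ℝ≥0∞) :
    ∫⁻ p in simplexSet, f p ≤ ∫⁻ s in Icc 0 1, ∫⁻ t in Icc s 1, f (s, t) := by
  rw [setLIntegral_setLIntegral_eq_lintegral_lintegral_indicator measurableSet_Icc
    (fun _ => measurableSet_Icc) fun s t => f (s, t), setOf_mem_Icc_and_mem_Icc_eq_simplexSet,
    ← lintegral_indicator measurableSet_simplexSet, Measure.volume_eq_prod]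
  exact lintegral_prod_le _

lemma lintegral_Icc_lintegral_Ioc_swap (a b : ℝ) {G : ℝ → ℝ → ℝ≥0∞}
    (hG : Measurable (Function.uncurry G)) :
    ∫⁻ t in Icc a b, ∫⁻ u in Ioc a t, G t u = ∫⁻ u in Ioc a b, ∫⁻ t in Icc u b, G t u := by
  set T : Set (ℝ × ℝ) := {q | q.1 ∈ Icc a b ∧ q.2 ∈ Ioc a q.1}
  have hT : MeasurableSet T :=
    (measurable_fst measurableSet_Icc).inter
      ((measurableSet_lt measurable_const measurable_snd).inter
        (measurableSet_le measurable_snd measurable_fst))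
  rw [setLIntegral_setLIntegral_eq_lintegral_lintegral_indicator measurableSet_Icc
      (fun _ => measurableSet_Ioc),
    setLIntegral_setLIntegral_eq_lintegral_lintegral_indicator measurableSet_Ioc
      (fun _ => measurableSet_Icc) fun u t => G t u,
    lintegral_lintegral_swap (f := fun t u => T.indicator (Function.uncurry G) (t, u))
      (hG.indicator hT).aemeasurable]
  refine lintegral_congr fun u => lintegral_congr fun t => ?_
  simp only [T, indicator, mem_ofPred_eq, mem_Icc, mem_Ioc, Function.uncurry_apply_pair]
  grind

lemma rpow_le_rpow_neg_of_le_of_le_one {a b β γ : ℝ} (ha : 0 < a) (hab : a ≤ b) (hb : b ≤ 1)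
    (hγ : 0 ≤ γ) (hβγ : 0 ≤ β + γ) : b ^ β ≤ a ^ (-γ) :=
  have hb0 : 0 < b := ha.trans_le hab
  calc b ^ β = b ^ (β + γ) * b ^ (-γ) := by rw [← Real.rpow_add hb0]; ring_nf
    _ ≤ 1 * a ^ (-γ) :=
        mul_le_mul (Real.rpow_le_one hb0.le hb hβγ)
          (Real.rpow_le_rpow_of_nonpos ha hab (neg_nonpos.2 hγ)) (by positivity) zero_le_one
    _ = a ^ (-γ) := one_mul _

lemma lintegral_simplexSet_rpow_mul_lintegral_Ioc_le {F : ℝ × ℝ → ℝ≥0∞} (hF : Measurable F)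
    {β γ : ℝ} (hγ : 0 ≤ γ) (hβγ : 0 ≤ β + γ) :
    ∫⁻ p in simplexSet, ENNReal.ofReal ((p.2 - p.1) ^ β) * ∫⁻ u in Ioc p.1 p.2, F (p.1, u)
      ≤ ∫⁻ p in simplexSet, ENNReal.ofReal ((p.2 - p.1) ^ (-γ)) * F p := by
  calc _ ≤ ∫⁻ s in Icc 0 1, ∫⁻ t in Icc s 1,
          ENNReal.ofReal ((t - s) ^ β) * ∫⁻ u in Ioc s t, F (s, u) :=
        lintegral_simplexSet_le _
    _ = ∫⁻ s in Icc 0 1, ∫⁻ u in Ioc s 1, ∫⁻ t in Icc u 1,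
          ENNReal.ofReal ((t - s) ^ β) * F (s, u) := by
        refine lintegral_congr fun s => ?_
        simp_rw [← lintegral_const_mul' _ _ ENNReal.ofReal_ne_top]
        exact lintegral_Icc_lintegral_Ioc_swap s 1 (by fun_prop)
    _ ≤ ∫⁻ s in Icc 0 1, ∫⁻ u in Ioc s 1, ∫⁻ t in Icc u 1,
          ENNReal.ofReal ((u - s) ^ (-γ)) * F (s, u) := by
        refine setLIntegral_mono' measurableSet_Icc fun s hs => ?_
        refine setLIntegral_mono' measurableSet_Ioc fun u hu => ?_
        refine setLIntegral_mono' measurableSet_Icc fun t ht => ?_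
        gcongr
        exact rpow_le_rpow_neg_of_le_of_le_one (sub_pos.2 hu.1) (by linarith [ht.1])
          (by linarith [ht.2, hs.1]) hγ hβγ
    _ ≤ ∫⁻ s in Icc 0 1, ∫⁻ u in Icc s 1, ENNReal.ofReal ((u - s) ^ (-γ)) * F (s, u) := by
        refine setLIntegral_mono' measurableSet_Icc fun s hs => ?_
        calc _ ≤ ∫⁻ u in Ioc s 1, ENNReal.ofReal ((u - s) ^ (-γ)) * F (s, u) := by
              refine setLIntegral_mono' measurableSet_Ioc fun u hu => ?_
              rw [setLIntegral_const, Real.volume_Icc]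
              exact mul_le_of_le_one_right' (ENNReal.ofReal_le_one.2 (by linarith [hu.1, hs.1]))
          _ ≤ _ := lintegral_mono_set Ioc_subset_Icc_self
    _ = _ := (lintegral_simplexSet
          (f := fun p => ENNReal.ofReal ((p.2 - p.1) ^ (-γ)) * F p) (by fun_prop)).symm

/-- `besovNorm m θ f` is the `L^m` norm of `besovWeighted m θ f` on the simplex. -/
noncomputable def besovWeighted (m : ℕ) (θ : ℝ) (f : ℝ → ℝ → ℝ) (p : ℝ × ℝ) : ℝ :=
  f p.1 p.2 / (p.2 - p.1) ^ ((2 + m * θ) / m)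

local notation "μΔ" => volume.restrict simplexSet

section BesovWeighted

variable {m : ℕ} {θ : ℝ} {f g : ℝ → ℝ → ℝ}

lemma abs_besovWeighted_pow (hm : m ≠ 0) {p : ℝ × ℝ} (hp : p.1 ≤ p.2) :
    |besovWeighted m θ f p| ^ m = |f p.1 p.2| ^ m / (p.2 - p.1) ^ (2 + m * θ) := by
  have hd : 0 ≤ p.2 - p.1 := sub_nonneg.2 hp
  rw [besovWeighted, abs_div, abs_of_nonneg (Real.rpow_nonneg hd _), div_pow,
    ← Real.rpow_mul_natCast hd, div_mul_cancel₀ _ (Nat.cast_ne_zero.2 hm)]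

lemma eLpNorm_besovWeighted_rpow (hm : m ≠ 0) :
    eLpNorm (besovWeighted m θ f) m μΔ ^ (m : ℝ)
      = ∫⁻ p in simplexSet, ENNReal.ofReal (|f p.1 p.2| ^ m / (p.2 - p.1) ^ (2 + m * θ)) := by
  have h := eLpNorm_nnreal_pow_eq_lintegral (f := besovWeighted m θ f) (μ := μΔ)
    (p := (m : ℝ≥0)) (Nat.cast_ne_zero.2 hm)
  simp only [ENNReal.coe_natCast, NNReal.coe_natCast] at h
  rw [h]
  refine setLIntegral_congr_fun measurableSet_simplexSet fun p hp => ?_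
  rw [Real.enorm_eq_ofReal_abs, ENNReal.rpow_natCast, ← ENNReal.ofReal_pow (abs_nonneg _),
    abs_besovWeighted_pow hm hp.2.1]

lemma besovNorm_integrand_nonneg :
    0 ≤ᵐ[μΔ] fun p : ℝ × ℝ => |f p.1 p.2| ^ m / (p.2 - p.1) ^ (2 + m * θ) :=
  ae_restrict_of_forall_mem measurableSet_simplexSet fun _ hp =>
    div_nonneg (pow_nonneg (abs_nonneg _) _) (Real.rpow_nonneg (sub_nonneg.2 hp.2.1) _)

lemma besovNorm_nonneg : 0 ≤ besovNorm m θ f :=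
  Real.rpow_nonneg (integral_nonneg_of_ae besovNorm_integrand_nonneg) _

lemma besovNorm_le_of_eLpNorm_le (hm : m ≠ 0) {C : ℝ} (hC : 0 ≤ C)
    (h : eLpNorm (besovWeighted m θ f) m μΔ ≤ ENNReal.ofReal C) : besovNorm m θ f ≤ C := by
  have hI : ∫ p in simplexSet, |f p.1 p.2| ^ m / (p.2 - p.1) ^ (2 + m * θ) ≤ C ^ m := by
    by_cases hf : BesovFinite m θ f
    · rw [← ENNReal.ofReal_le_ofReal_iff (by positivity),
        ofReal_integral_eq_lintegral_ofReal hf besovNorm_integrand_nonneg,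
        ← eLpNorm_besovWeighted_rpow hm, ENNReal.ofReal_pow hC, ← ENNReal.rpow_natCast]
      gcongr
    · rw [integral_undef hf]
      positivity
  calc besovNorm m θ f ≤ (C ^ m) ^ ((1 : ℝ) / m) :=
        Real.rpow_le_rpow (integral_nonneg_of_ae besovNorm_integrand_nonneg) hI (by positivity)
    _ = C := by rw [one_div, Real.pow_rpow_inv_natCast hC hm]

lemma eLpNorm_besovWeighted_eq (hm : m ≠ 0) (hf : BesovFinite m θ f) :
    eLpNorm (besovWeighted m θ f) m μΔ = ENNReal.ofReal (besovNorm m θ f) := by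
  have hI := integral_nonneg_of_ae (besovNorm_integrand_nonneg (m := m) (θ := θ) (f := f))
  refine ENNReal.rpow_left_injective (Nat.cast_ne_zero.2 hm) ?_
  simp only
  rw [eLpNorm_besovWeighted_rpow hm,
    ← ofReal_integral_eq_lintegral_ofReal hf besovNorm_integrand_nonneg, besovNorm,
    ENNReal.ofReal_rpow_of_nonneg (Real.rpow_nonneg hI _) (Nat.cast_nonneg _),
    ← Real.rpow_mul hI, one_div, inv_mul_cancel₀ (Nat.cast_ne_zero.2 hm), Real.rpow_one]

lemma aestronglyMeasurable_besovWeighted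
    (hf : ContinuousOn (fun p : ℝ × ℝ => f p.1 p.2) simplexSet) :
    AEStronglyMeasurable (besovWeighted m θ f) μΔ :=
  ((hf.aestronglyMeasurable measurableSet_simplexSet).aemeasurable.div
    (by fun_prop : Measurable fun p : ℝ × ℝ => (p.2 - p.1) ^ ((2 + m * θ) / m)).aemeasurable
    ).aestronglyMeasurable

lemma eLpNorm_besovWeighted_sub_le (hm : m ≠ 0)
    (hf : ContinuousOn (fun p : ℝ × ℝ => f p.1 p.2) simplexSet)
    (hg : ContinuousOn (fun p : ℝ × ℝ => g p.1 p.2) simplexSet) :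
    eLpNorm (besovWeighted m θ fun s t => f s t - g s t) m μΔ
      ≤ eLpNorm (besovWeighted m θ f) m μΔ + eLpNorm (besovWeighted m θ g) m μΔ := by
  have hsub : (besovWeighted m θ fun s t => f s t - g s t)
      = besovWeighted m θ f - besovWeighted m θ g :=
    funext fun p => sub_div (f p.1 p.2) (g p.1 p.2) _
  rw [hsub]
  exact eLpNorm_sub_le (aestronglyMeasurable_besovWeighted hf)
    (aestronglyMeasurable_besovWeighted hg) (by exact_mod_cast Nat.one_le_iff_ne_zero.2 hm)

end BesovWeighted

section Pointwise

variable {d e K α : ℝ}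

lemma abs_div_rpow_le (hd0 : 0 ≤ d) (hd1 : d ≤ 1) (he : 0 < e) (heα : e ≤ α) {x : ℝ}
    (hK : 0 ≤ K) (hx : |x| ≤ K * d ^ α) : |x / d ^ e| ≤ K := by
  rcases hd0.eq_or_lt with rfl | hd
  · simp [Real.zero_rpow he.ne', hK]
  calc |x / d ^ e| ≤ K * d ^ α / d ^ e := by
        rw [abs_div, abs_of_pos (Real.rpow_pos_of_pos hd e)]; gcongr
    _ = K * d ^ (α - e) := by rw [Real.rpow_sub hd, mul_div_assoc]
    _ ≤ K := mul_le_of_le_one_right hK (Real.rpow_le_one hd.le hd1 (sub_nonneg.2 heα))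

lemma abs_mul_div_rpow_le {e' : ℝ} (hd0 : 0 ≤ d) (hd1 : d ≤ 1) (he : 0 < e)
    (hee' : e ≤ α + e') {x y : ℝ} (hK : 0 ≤ K) (hy : |y| ≤ K * d ^ α) :
    |x * y / d ^ e| ≤ K * |x / d ^ e'| := by
  rcases hd0.eq_or_lt with rfl | hd
  · simp only [Real.zero_rpow he.ne', div_zero, abs_zero]
    positivity
  calc |x * y / d ^ e| ≤ |x| * (K * d ^ α) / d ^ e := by
        rw [abs_div, abs_mul, abs_of_pos (Real.rpow_pos_of_pos hd e)]; gcongr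
    _ = K * |x| * d ^ (α - e) := by rw [Real.rpow_sub hd]; ring
    _ ≤ K * |x| * d ^ (-e') :=
        mul_le_mul_of_nonneg_left (Real.rpow_le_rpow_of_exponent_ge hd hd1 (by linarith))
          (by positivity)
    _ = K * |x / d ^ e'| := by
        rw [Real.rpow_neg hd.le, abs_div, abs_of_pos (Real.rpow_pos_of_pos hd e')]; ring

end Pointwise

section BesovBounds

variable {m : ℕ} {θ K α : ℝ} {f g : ℝ → ℝ → ℝ}

lemma besovWeighted_exponent_pos (hm : m ≠ 0) (hθ : 0 ≤ θ) : 0 < (2 + m * θ) / m := by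
  have : (0 : ℝ) < m := Nat.cast_pos.2 (Nat.pos_of_ne_zero hm)
  positivity

lemma eLpNorm_besovWeighted_le_of_abs_le (hm : m ≠ 0) (hθ : 0 ≤ θ) (hK : 0 ≤ K)
    (hθα : 2 + m * θ ≤ m * α) (hg : ∀ p ∈ simplexSet, |g p.1 p.2| ≤ K * (p.2 - p.1) ^ α) :
    eLpNorm (besovWeighted m θ g) m μΔ ≤ ENNReal.ofReal K := by
  have hm' : (0 : ℝ) < m := Nat.cast_pos.2 (Nat.pos_of_ne_zero hm)
  calc eLpNorm (besovWeighted m θ g) m μΔ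
      ≤ μΔ univ ^ (m : ℝ≥0∞).toReal⁻¹ * ENNReal.ofReal K := by
        refine eLpNorm_le_of_ae_bound
          (ae_restrict_of_forall_mem measurableSet_simplexSet fun p hp => ?_)
        exact abs_div_rpow_le (sub_nonneg.2 hp.2.1) (by linarith [hp.1, hp.2.2])
          (besovWeighted_exponent_pos hm hθ) (by rw [div_le_iff₀ hm']; linarith) hK (hg p hp)
    _ ≤ 1 * ENNReal.ofReal K := by
        gcongr
        rw [Measure.restrict_apply_univ]
        exact ENNReal.rpow_le_one volume_simplexSet_le_one (by positivity)
    _ = ENNReal.ofReal K := one_mul _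

lemma eLpNorm_besovWeighted_mul_le {γ : ℝ} (hm : m ≠ 0) (hθ : 0 ≤ θ) (hK : 0 ≤ K)
    (hθα : θ ≤ α + γ) (hg : ∀ p ∈ simplexSet, |g p.1 p.2| ≤ K * (p.2 - p.1) ^ α) :
    eLpNorm (besovWeighted m θ fun s t => f s t * g s t) m μΔ
      ≤ ENNReal.ofReal K * eLpNorm (besovWeighted m γ f) m μΔ := by
  have hm' : (m : ℝ) ≠ 0 := Nat.cast_ne_zero.2 hm
  refine eLpNorm_le_mul_eLpNorm_of_ae_le_mul
    (ae_restrict_of_forall_mem measurableSet_simplexSet fun p hp => ?_) _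
  refine abs_mul_div_rpow_le (sub_nonneg.2 hp.2.1) (by linarith [hp.1, hp.2.2])
    (besovWeighted_exponent_pos hm hθ) ?_ hK (hg p hp)
  rw [add_div, add_div, mul_div_cancel_left₀ _ hm', mul_div_cancel_left₀ _ hm']
  linarith

end BesovBounds

section IntegralInequalities

variable {α : Type*} [MeasurableSpace α] {μ : Measure α}

lemma abs_integral_mul_le_sqrt_mul_sqrt {f g : α → ℝ} (hf : MemLp f 2 μ) (hg : MemLp g 2 μ) :
    |∫ x, f x * g x ∂μ| ≤ √(∫ x, f x ^ 2 ∂μ) * √(∫ x, g x ^ 2 ∂μ) := by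
  have h2 : ENNReal.ofReal 2 = 2 := ENNReal.ofReal_ofNat 2
  have holder := integral_mul_le_Lp_mul_Lq_of_nonneg Real.HolderConjugate.two_two
    (ae_of_all μ fun x => abs_nonneg (f x)) (ae_of_all μ fun x => abs_nonneg (g x))
    (h2 ▸ hf.abs) (h2 ▸ hg.abs)
  simp only [Real.rpow_two, sq_abs, ← Real.sqrt_eq_rpow] at holder
  calc |∫ x, f x * g x ∂μ| ≤ ∫ x, |f x| * |g x| ∂μ := by
        simpa only [abs_mul] using abs_integral_le_integral_abs (f := fun x => f x * g x)
    _ ≤ _ := holder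

lemma integral_pow_le_measureReal_pow_mul_integral_pow [IsFiniteMeasure μ] {g : α → ℝ} {k : ℕ}
    (hk : k ≠ 0) (hg0 : ∀ᵐ x ∂μ, 0 ≤ g x) (hg : Integrable g μ)
    (hgk : Integrable (fun x => g x ^ k) μ) :
    (∫ x, g x ∂μ) ^ k ≤ μ.real univ ^ (k - 1) * ∫ x, g x ^ k ∂μ := by
  rcases eq_zero_or_neZero μ with rfl | hμ
  · simp [zero_pow hk]
  have hpos : 0 < μ.real univ := by
    rw [measureReal_def, ENNReal.toReal_pos_iff]
    exact ⟨Measure.measure_univ_pos.2 (NeZero.ne μ), measure_lt_top μ univ⟩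
  have jensen := (convexOn_pow k).map_average_le (continuous_pow k).continuousOn isClosed_Ici
    hg0 hg hgk
  simp only [average_eq, smul_eq_mul] at jensen
  obtain ⟨j, rfl⟩ := Nat.exists_eq_succ_of_ne_zero hk
  calc (∫ x, g x ∂μ) ^ (j + 1)
      = μ.real univ ^ (j + 1) * ((μ.real univ)⁻¹ * ∫ x, g x ∂μ) ^ (j + 1) := by
        rw [mul_pow, ← mul_assoc, ← mul_pow, mul_inv_cancel₀ hpos.ne', one_pow, one_mul]
    _ ≤ μ.real univ ^ (j + 1) * ((μ.real univ)⁻¹ * ∫ x, g x ^ (j + 1) ∂μ) := by gcongr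
    _ = μ.real univ ^ (j + 1 - 1) * ∫ x, g x ^ (j + 1) ∂μ := by
        rw [Nat.add_sub_cancel, pow_succ, mul_assoc, ← mul_assoc (μ.real univ),
          mul_inv_cancel₀ hpos.ne', one_mul]

end IntegralInequalities

lemma abs_setIntegral_Ioc_le_sqrt_mul_sqrt {g : ℝ → ℝ} {a b : ℝ} (hab : a ≤ b)
    (hg : MemLp g 2 (volume.restrict (Ioc a b))) :
    |∫ u in Ioc a b, g u| ≤ √(b - a) * √(∫ u in Ioc a b, g u ^ 2) := by
  simpa [Real.volume_real_Ioc_of_le hab] using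
    abs_integral_mul_le_sqrt_mul_sqrt (memLp_const (1 : ℝ)) hg

section CameronMartin

variable {g : ℝ → ℝ} {s t : ℝ}

lemma setIntegral_Ioc_sq_le (hg : MemLp g 2 (volume.restrict (Icc 0 1))) (hs : 0 ≤ s)
    (ht : t ≤ 1) : ∫ u in Ioc s t, g u ^ 2 ≤ ∫ u in (0:ℝ)..1, g u ^ 2 := by
  rw [intervalIntegral.integral_of_le zero_le_one]
  exact setIntegral_mono_set (IntegrableOn.mono_set hg.integrable_sq Ioc_subset_Icc_self)
    (ae_of_all _ fun u => sq_nonneg (g u)) (Ioc_subset_Ioc hs ht).eventuallyLE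

lemma memLp_restrict_Ioc_of_Icc (hg : MemLp g 2 (volume.restrict (Icc 0 1))) (hs : 0 ≤ s)
    (ht : t ≤ 1) : MemLp g 2 (volume.restrict (Ioc s t)) :=
  hg.mono_measure
    (Measure.restrict_mono (Ioc_subset_Icc_self.trans (Icc_subset_Icc hs ht)) le_rfl)

lemma continuousOn_primitive_Icc_zero_one (hg : IntegrableOn g (Icc 0 1)) :
    ContinuousOn (fun x => ∫ u in (0:ℝ)..x, g u) (Icc 0 1) := by
  have := intervalIntegral.continuousOn_primitive_interval (a := 0) (b := 1)
    (by rwa [uIcc_of_le zero_le_one])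
  rwa [uIcc_of_le zero_le_one] at this

lemma integral_eq_sub_of_integrableOn_Icc (hg : IntegrableOn g (Icc 0 1))
    (hs : s ∈ Icc (0:ℝ) 1) (ht : t ∈ Icc (0:ℝ) 1) :
    ∫ u in s..t, g u = (∫ u in (0:ℝ)..t, g u) - ∫ u in (0:ℝ)..s, g u :=
  (intervalIntegral.integral_interval_sub_left
    (hg.mono_set (uIcc_subset_Icc (left_mem_Icc.2 zero_le_one) ht)).intervalIntegrable
    (hg.mono_set (uIcc_subset_Icc (left_mem_Icc.2 zero_le_one) hs)).intervalIntegrable).symm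

lemma abs_sub_le_mul_rpow_of_eq_primitive {φ : ℝ → ℝ}
    (hg : MemLp g 2 (volume.restrict (Icc 0 1)))
    (hφ : ∀ t ∈ Icc (0:ℝ) 1, φ t = ∫ u in (0:ℝ)..t, g u) (hs : 0 ≤ s) (hst : s ≤ t)
    (ht : t ≤ 1) : |φ t - φ s| ≤ √(∫ u in (0:ℝ)..1, g u ^ 2) * (t - s) ^ (1 / 2 : ℝ) := by
  rw [hφ t ⟨hs.trans hst, ht⟩, hφ s ⟨hs, hst.trans ht⟩,
    ← integral_eq_sub_of_integrableOn_Icc (hg.integrable one_le_two) ⟨hs, hst.trans ht⟩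
      ⟨hs.trans hst, ht⟩,
    intervalIntegral.integral_of_le hst, ← Real.sqrt_eq_rpow, mul_comm]
  exact (abs_setIntegral_Ioc_le_sqrt_mul_sqrt hst (memLp_restrict_Ioc_of_Icc hg hs ht)).trans
    (by gcongr; exact setIntegral_Ioc_sq_le hg hs ht)

end CameronMartin

/-- The iterated integral `C(v, φ)_{s,t}` of the paper, for a path `φ` with derivative `g`. -/
noncomputable def iteratedIntegral (v g : ℝ → ℝ) (s t : ℝ) : ℝ :=
  ∫ u in s..t, (v u - v s) * g u

section IteratedIntegral

variable {v g : ℝ → ℝ} {θ : ℝ} {k : ℕ}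

lemma abs_iteratedIntegral_pow_le {s t : ℝ} (hst : s ≤ t) (hv : ContinuousOn v (Icc s t))
    (hg : MemLp g 2 (volume.restrict (Ioc s t))) (hk : k ≠ 0) :
    |iteratedIntegral v g s t| ^ (2 * k) ≤ (∫ u in Ioc s t, g u ^ 2) ^ k *
      ((t - s) ^ (k - 1) * ∫ u in Ioc s t, |v u - v s| ^ (2 * k)) := by
  have hvs : ContinuousOn (fun u => v u - v s) (Icc s t) := hv.sub continuousOn_const
  have hint : ∀ n : ℕ, IntegrableOn (fun u => (v u - v s) ^ n) (Ioc s t) := fun n =>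
    (hvs.pow n).integrableOn_Icc.mono_set Ioc_subset_Icc_self
  have hL2 : MemLp (fun u => v u - v s) 2 (volume.restrict (Ioc s t)) :=
    (memLp_two_iff_integrable_sq ((hvs.aestronglyMeasurable measurableSet_Icc).mono_measure
      (Measure.restrict_mono Ioc_subset_Icc_self le_rfl))).2 (hint 2)
  have hCS : |iteratedIntegral v g s t|
      ≤ √(∫ u in Ioc s t, (v u - v s) ^ 2) * √(∫ u in Ioc s t, g u ^ 2) := by
    rw [iteratedIntegral, intervalIntegral.integral_of_le hst]
    exact abs_integral_mul_le_sqrt_mul_sqrt hL2 hg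
  have hJensen : (∫ u in Ioc s t, (v u - v s) ^ 2) ^ k
      ≤ (t - s) ^ (k - 1) * ∫ u in Ioc s t, |v u - v s| ^ (2 * k) := by
    have h := integral_pow_le_measureReal_pow_mul_integral_pow hk
      (ae_of_all _ fun u => sq_nonneg (v u - v s)) (hint 2)
      (by simpa only [IntegrableOn, ← pow_mul] using hint (2 * k))
    simpa only [measureReal_restrict_apply_univ, Real.volume_real_Ioc_of_le hst, ← pow_mul,
      (even_two_mul k).pow_abs] using h
  calc |iteratedIntegral v g s t| ^ (2 * k)
      ≤ (√(∫ u in Ioc s t, (v u - v s) ^ 2) * √(∫ u in Ioc s t, g u ^ 2)) ^ (2 * k) := by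
        gcongr
    _ = (∫ u in Ioc s t, g u ^ 2) ^ k * (∫ u in Ioc s t, (v u - v s) ^ 2) ^ k := by
        rw [mul_pow, pow_mul, pow_mul, Real.sq_sqrt (setIntegral_nonneg measurableSet_Ioc
          fun u _ => sq_nonneg _), Real.sq_sqrt (setIntegral_nonneg measurableSet_Ioc
          fun u _ => sq_nonneg _), mul_comm]
    _ ≤ _ := by gcongr

lemma continuousOn_iteratedIntegral (hv : ContinuousOn v (Icc 0 1))
    (hg : IntegrableOn g (Icc 0 1)) :
    ContinuousOn (fun p : ℝ × ℝ => iteratedIntegral v g p.1 p.2) simplexSet := by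
  have hvg : IntegrableOn (fun u => v u * g u) (Icc 0 1) := hg.continuousOn_mul hv isCompact_Icc
  set P : ℝ → ℝ := fun x => ∫ u in (0:ℝ)..x, v u * g u
  set Q : ℝ → ℝ := fun x => ∫ u in (0:ℝ)..x, g u
  have hP : ContinuousOn P (Icc 0 1) := continuousOn_primitive_Icc_zero_one hvg
  have hQ : ContinuousOn Q (Icc 0 1) := continuousOn_primitive_Icc_zero_one hg
  have hcont : ContinuousOn (fun p : ℝ × ℝ => P p.2 - P p.1 - v p.1 * (Q p.2 - Q p.1))
      simplexSet :=
    hP.increment_simplexSet.sub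
      ((hv.comp continuousOn_fst mapsTo_fst_simplexSet).mul hQ.increment_simplexSet)
  refine hcont.congr fun p hp => ?_
  have hs := mapsTo_fst_simplexSet hp
  have ht := mapsTo_snd_simplexSet hp
  have hint : ∀ {h : ℝ → ℝ}, IntegrableOn h (Icc 0 1) → IntervalIntegrable h volume p.1 p.2 :=
    fun hh => (hh.mono_set (uIcc_subset_Icc hs ht)).intervalIntegrable
  simp only [iteratedIntegral, sub_mul, P, Q]
  rw [intervalIntegral.integral_sub (hint hvg) ((hint hg).const_mul (v p.1)),
    intervalIntegral.integral_const_mul, integral_eq_sub_of_integrableOn_Icc hvg hs ht,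
    integral_eq_sub_of_integrableOn_Icc hg hs ht]

lemma abs_iteratedIntegral_pow_div_rpow_le (hk : k ≠ 0) (hθ : 0 ≤ θ)
    (hv : ContinuousOn v (Icc 0 1)) (hg : MemLp g 2 (volume.restrict (Icc 0 1))) {s t : ℝ}
    (hs : 0 ≤ s) (hst : s ≤ t) (ht : t ≤ 1) :
    |iteratedIntegral v g s t| ^ (2 * k) / (t - s) ^ (2 + ((2 * k : ℕ) : ℝ) * θ)
      ≤ √(∫ u in (0:ℝ)..1, g u ^ 2) ^ (2 * k) * ((t - s) ^ ((k : ℝ) - 3 - ((2 * k : ℕ) : ℝ) * θ)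
        * ∫ u in Ioc s t, |v u - v s| ^ (2 * k)) := by
  have hJ : 0 ≤ ∫ u in Ioc s t, |v u - v s| ^ (2 * k) :=
    setIntegral_nonneg measurableSet_Ioc fun u _ => by positivity
  rcases hst.eq_or_lt with rfl | hlt
  · rw [sub_self, Real.zero_rpow (by positivity), div_zero]
    positivity
  have hd : 0 < t - s := sub_pos.2 hlt
  have hG := setIntegral_Ioc_sq_le hg hs ht
  calc |iteratedIntegral v g s t| ^ (2 * k) / (t - s) ^ (2 + ((2 * k : ℕ) : ℝ) * θ)
      ≤ (∫ u in (0:ℝ)..1, g u ^ 2) ^ k * ((t - s) ^ (k - 1) *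
          ∫ u in Ioc s t, |v u - v s| ^ (2 * k)) / (t - s) ^ (2 + ((2 * k : ℕ) : ℝ) * θ) := by
        gcongr
        refine (abs_iteratedIntegral_pow_le hst (hv.mono (Icc_subset_Icc hs ht))
          (memLp_restrict_Ioc_of_Icc hg hs ht) hk).trans ?_
        gcongr
    _ = _ := by
        rw [pow_mul, Real.sq_sqrt ((setIntegral_nonneg measurableSet_Ioc
          fun u _ => sq_nonneg _).trans hG), ← Real.rpow_natCast (t - s),
          Nat.cast_pred (Nat.pos_of_ne_zero hk), mul_div_assoc, mul_div_right_comm,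
          ← Real.rpow_sub hd]
        congr 3
        ring

lemma ofReal_abs_iteratedIntegral_pow_div_rpow_le (hk : k ≠ 0) (hθ : 0 ≤ θ)
    (hv : ContinuousOn v (Icc 0 1)) (hg : MemLp g 2 (volume.restrict (Icc 0 1))) {s t : ℝ}
    (hs : 0 ≤ s) (hst : s ≤ t) (ht : t ≤ 1) :
    ENNReal.ofReal (|iteratedIntegral v g s t| ^ (2 * k) / (t - s) ^ (2 + ((2 * k : ℕ) : ℝ) * θ))
      ≤ ENNReal.ofReal (√(∫ u in (0:ℝ)..1, g u ^ 2) ^ (2 * k)) *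
        (ENNReal.ofReal ((t - s) ^ ((k : ℝ) - 3 - ((2 * k : ℕ) : ℝ) * θ)) *
          ∫⁻ u in Ioc s t, ENNReal.ofReal (|v u - v s| ^ (2 * k))) := by
  have hint : IntegrableOn (fun u => |v u - v s| ^ (2 * k)) (Ioc s t) :=
    (((hv.mono (Icc_subset_Icc hs ht)).sub continuousOn_const).abs.pow _).integrableOn_Icc.mono_set
      Ioc_subset_Icc_self
  rw [← ofReal_integral_eq_lintegral_ofReal hint (ae_of_all _ fun u => by positivity),
    ← ENNReal.ofReal_mul (by positivity), ← ENNReal.ofReal_mul (by positivity)]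
  exact ENNReal.ofReal_le_ofReal (abs_iteratedIntegral_pow_div_rpow_le hk hθ hv hg hs hst ht)

lemma lintegral_abs_iteratedIntegral_pow_div_rpow_le (hk : k ≠ 0) (hθ : 0 ≤ θ)
    (hkθ : 2 ≤ ((2 * k : ℕ) : ℝ) * (1 - θ)) (hv : ContinuousOn v (Icc 0 1))
    (hg : MemLp g 2 (volume.restrict (Icc 0 1))) :
    ∫⁻ p in simplexSet, ENNReal.ofReal
        (|iteratedIntegral v g p.1 p.2| ^ (2 * k) / (p.2 - p.1) ^ (2 + ((2 * k : ℕ) : ℝ) * θ))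
      ≤ ENNReal.ofReal (√(∫ u in (0:ℝ)..1, g u ^ 2) ^ (2 * k)) * ∫⁻ p in simplexSet,
        ENNReal.ofReal (|v p.2 - v p.1| ^ (2 * k) /
          (p.2 - p.1) ^ (2 + ((2 * k : ℕ) : ℝ) * (θ / 2))) := by
  -- Tonelli needs a measurable integrand: extend `v` continuously by constants off `[0, 1]`.
  set v' := IccExtend zero_le_one ((Icc 0 1).domRestrict v)
  have hv' : Continuous v' := continuous_IccExtend_iff.2 hv.domRestrict
  let F : ℝ × ℝ → ℝ≥0∞ := fun q => ENNReal.ofReal (|v' q.2 - v' q.1| ^ (2 * k))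
  have hF : ∀ p ∈ simplexSet, F p = ENNReal.ofReal (|v p.2 - v p.1| ^ (2 * k)) :=
    fun p hp => by
      simp only [F, v', IccExtend_of_mem _ _ (mapsTo_fst_simplexSet hp),
        IccExtend_of_mem _ _ (mapsTo_snd_simplexSet hp), domRestrict_apply]
  set K := √(∫ u in (0:ℝ)..1, g u ^ 2)
  calc _ ≤ ∫⁻ p in simplexSet, ENNReal.ofReal (K ^ (2 * k)) *
          (ENNReal.ofReal ((p.2 - p.1) ^ ((k : ℝ) - 3 - ((2 * k : ℕ) : ℝ) * θ)) *
            ∫⁻ u in Ioc p.1 p.2, F (p.1, u)) := by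
        refine setLIntegral_mono' measurableSet_simplexSet fun p hp => ?_
        rw [setLIntegral_congr_fun measurableSet_Ioc fun u hu =>
          hF (p.1, u) ⟨hp.1, hu.1.le, hu.2.trans hp.2.2⟩]
        exact ofReal_abs_iteratedIntegral_pow_div_rpow_le hk hθ hv hg hp.1 hp.2.1 hp.2.2
    _ = ENNReal.ofReal (K ^ (2 * k)) * ∫⁻ p in simplexSet,
          ENNReal.ofReal ((p.2 - p.1) ^ ((k : ℝ) - 3 - ((2 * k : ℕ) : ℝ) * θ)) *
            ∫⁻ u in Ioc p.1 p.2, F (p.1, u) :=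
        lintegral_const_mul' _ _ ENNReal.ofReal_ne_top
    _ ≤ ENNReal.ofReal (K ^ (2 * k)) * ∫⁻ p in simplexSet,
          ENNReal.ofReal ((p.2 - p.1) ^ (-(2 + ((2 * k : ℕ) : ℝ) * (θ / 2)))) * F p :=
        mul_le_mul_right (lintegral_simplexSet_rpow_mul_lintegral_Ioc_le (by fun_prop)
          (by positivity) (by push_cast at hkθ ⊢; linarith)) _
    _ = _ := by
        congr 1
        refine setLIntegral_congr_fun measurableSet_simplexSet fun p hp => ?_
        rw [hF p hp, ← ENNReal.ofReal_mul (Real.rpow_nonneg (sub_nonneg.2 hp.2.1) _),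
          Real.rpow_neg (sub_nonneg.2 hp.2.1),
          div_eq_inv_mul (|v p.2 - v p.1| ^ (2 * k))]

lemma eLpNorm_besovWeighted_iteratedIntegral_le {m : ℕ} (hm : Even m) (hθ : 0 ≤ θ)
    (hmθ : 2 ≤ m * (1 - θ)) (hv : ContinuousOn v (Icc 0 1))
    (hg : MemLp g 2 (volume.restrict (Icc 0 1))) :
    eLpNorm (besovWeighted m θ (iteratedIntegral v g)) m μΔ
      ≤ ENNReal.ofReal √(∫ u in (0:ℝ)..1, g u ^ 2)
        * eLpNorm (besovWeighted m (θ / 2) fun s t => v t - v s) m μΔ := by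
  obtain ⟨k, rfl⟩ := hm.two_dvd
  have hk : k ≠ 0 := by rintro rfl; norm_num at hmθ
  have hm0 : 2 * k ≠ 0 := by omega
  rw [← ENNReal.rpow_le_rpow_iff (z := ((2 * k : ℕ) : ℝ)) (by positivity),
    ENNReal.mul_rpow_of_nonneg _ _ (by positivity), eLpNorm_besovWeighted_rpow hm0,
    eLpNorm_besovWeighted_rpow hm0, ENNReal.rpow_natCast, ← ENNReal.ofReal_pow (Real.sqrt_nonneg _)]
  exact lintegral_abs_iteratedIntegral_pow_div_rpow_le hk hθ hmθ hv hg

end IteratedIntegral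

open intervalIntegral

/-- Let `m` be a positive even integer and `θ ∈ (0,1)` with `m(1−θ) > 4`.
Let `w ∈ W_{m,θ/2}(ℝ)` and let `φ ∈ H` be a Cameron–Martin path, `φ t = ∫₀ᵗ φ'(u) du` with
`φ'` square-integrable on `[0,1]` and `‖φ‖_H = (∫₀¹ φ'(u)² du)^{1/2}`.  With
`C(w,φ)_{s,t} = ∫_s^t (w_u − w_s) φ'(u) du` and
`C(φ,w)_{s,t} = (w_t − w_s)(φ_t − φ_s) − C(w,φ)_{s,t}`, one has
`‖φ‖_{m,θ/2} ≤ ‖φ‖_H`, `‖C(w,φ)‖_{m,θ} ≤ ‖w‖_{m,θ/2} ‖φ‖_H` and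
`‖C(φ,w)‖_{m,θ} ≤ 2 ‖w‖_{m,θ/2} ‖φ‖_H`. -/
theorem iterated_integral_cameron_martin_bounds
    (m : ℕ) (hm : Even m) (hm0 : 0 < m) (θ : ℝ) (hθ0 : 0 < θ) (hθ1 : θ < 1)
    (hmθ : (m : ℝ) * (1 - θ) > 4)
    (w : ℝ → ℝ) (hw : MemW m (θ / 2) w)
    (φ φ' : ℝ → ℝ)
    (hφ'int : IntegrableOn φ' (Icc (0:ℝ) 1))
    (hφ'sq : IntegrableOn (fun u => φ' u ^ 2) (Icc (0:ℝ) 1))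
    (hφrepr : ∀ t ∈ Icc (0:ℝ) 1, φ t = ∫ u in (0:ℝ)..t, φ' u) :
    incNorm m (θ / 2) φ ≤ Real.sqrt (∫ u in (0:ℝ)..1, φ' u ^ 2) ∧
    besovNorm m θ (fun s t => ∫ u in s..t, (w u - w s) * φ' u)
      ≤ incNorm m (θ / 2) w * Real.sqrt (∫ u in (0:ℝ)..1, φ' u ^ 2) ∧
    besovNorm m θ
        (fun s t => (w t - w s) * (φ t - φ s) - ∫ u in s..t, (w u - w s) * φ' u)
      ≤ 2 * incNorm m (θ / 2) w * Real.sqrt (∫ u in (0:ℝ)..1, φ' u ^ 2) := by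
  obtain ⟨hwc, -, hwB⟩ := hw
  set K := √(∫ u in (0:ℝ)..1, φ' u ^ 2)
  set A := incNorm m (θ / 2) w
  have hK : 0 ≤ K := Real.sqrt_nonneg _
  have hA : 0 ≤ A := besovNorm_nonneg
  have hφ' : MemLp φ' 2 (volume.restrict (Icc 0 1)) :=
    (memLp_two_iff_integrable_sq hφ'int.aestronglyMeasurable).2 hφ'sq
  have hφinc : ∀ p ∈ simplexSet, |φ p.2 - φ p.1| ≤ K * (p.2 - p.1) ^ (1 / 2 : ℝ) :=
    fun p hp => abs_sub_le_mul_rpow_of_eq_primitive hφ' hφrepr hp.1 hp.2.1 hp.2.2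
  have hKA : ENNReal.ofReal K * eLpNorm (besovWeighted m (θ / 2) fun s t => w t - w s) m μΔ
      = ENNReal.ofReal (A * K) := by
    rw [eLpNorm_besovWeighted_eq hm0.ne' hwB, ← ENNReal.ofReal_mul hK, mul_comm]
    rfl
  have hC : eLpNorm (besovWeighted m θ (iteratedIntegral w φ')) m μΔ
      ≤ ENNReal.ofReal (A * K) :=
    (eLpNorm_besovWeighted_iteratedIntegral_le hm hθ0.le (by linarith) hwc hφ').trans_eq hKA
  have hwφ : eLpNorm (besovWeighted m θ fun s t => (w t - w s) * (φ t - φ s)) m μΔ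
      ≤ ENNReal.ofReal (A * K) :=
    (eLpNorm_besovWeighted_mul_le hm0.ne' hθ0.le hK (by linarith) hφinc).trans_eq hKA
  refine ⟨besovNorm_le_of_eLpNorm_le hm0.ne' hK
      (eLpNorm_besovWeighted_le_of_abs_le hm0.ne' (by positivity) hK (by linarith) hφinc),
    besovNorm_le_of_eLpNorm_le hm0.ne' (by positivity) hC,
    besovNorm_le_of_eLpNorm_le hm0.ne' (by positivity) ?_⟩
  have hφc : ContinuousOn φ (Icc 0 1) :=
    (continuousOn_primitive_Icc_zero_one hφ'int).congr hφrepr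
  calc _ ≤ _ := eLpNorm_besovWeighted_sub_le hm0.ne'
        (hwc.increment_simplexSet.mul hφc.increment_simplexSet)
        (continuousOn_iteratedIntegral hwc hφ'int)
    _ ≤ ENNReal.ofReal (A * K) + ENNReal.ofReal (A * K) := add_le_add hwφ hC
    _ = ENNReal.ofReal (2 * A * K) := by
        rw [← ENNReal.ofReal_add (by positivity) (by positivity)]
        ring_nf
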